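/- arXiv:2505.12366 — 5 statements merged into one kernel-verified Lean document; each statement's English description precedes it below -/
import Mathlib

section
/- For every real ε ≥ 0 and all real numbers x, y, the GRPO surrogate f(x, y) = min(x·y, clip(x, 1−ε, 1+ε)·y) satisfies: f(x, y) = y·min(x, 1+ε) whenever y > 0, and f(x, y) = −|y|·max(x, 1−ε) whenever y ≤ 0. In particular f(x, y) = 𝟙(y>0)·y·f⁺(x) − 𝟙(y≤0)·|y|·f⁻(x) with f⁺(x) = min(x, 1+ε) and f⁻(x) = max(x, 1−ε). -/
/-- The clipping operator used in PPO-style RL objectives. -/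
noncomputable def clip (x a b : ℝ) : ℝ := max a (min x b)

/-- GRPO's token-level surrogate objective. -/
noncomputable def grpoF (ε x y : ℝ) : ℝ := min (x * y) (clip x (1 - ε) (1 + ε) * y)

theorem min_clip_self {a b : ℝ} (hab : a ≤ b) (x : ℝ) : min x (clip x a b) = min x b := by
  unfold clip
  rcases le_total x b with hxb | hbx
  · rw [min_eq_left hxb, min_eq_left (le_max_right a x)]
  · rw [min_eq_right hbx, max_eq_right hab, min_eq_right hbx]

theorem max_clip_self {a b : ℝ} (hab : a ≤ b) (x : ℝ) : max x (clip x a b) = max x a := by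
  unfold clip
  rcases le_total x b with hxb | hbx
  · rw [min_eq_left hxb, max_left_comm, max_self, max_comm]
  · rw [min_eq_right hbx, max_eq_right hab, max_eq_left hbx, max_eq_left (hab.trans hbx)]

-- For `y > 0` the minimum of `x y` and `clip x y` is attained at the smaller ratio, and for
-- `y ≤ 0` at the larger one; clipping from the wrong side then has no effect.
theorem grpoF_of_pos {ε : ℝ} (hε : 0 ≤ ε) (x : ℝ) {y : ℝ} (hy : 0 < y) :
    grpoF ε x y = y * min x (1 + ε) := by
  rw [grpoF, ← min_mul_of_nonneg _ _ hy.le, min_clip_self (by linarith), mul_comm]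

theorem grpoF_of_nonpos {ε : ℝ} (hε : 0 ≤ ε) (x : ℝ) {y : ℝ} (hy : y ≤ 0) :
    grpoF ε x y = -(|y| * max x (1 - ε)) := by
  rw [grpoF, ← (antitone_mul_right hy).map_max, max_clip_self (by linarith), abs_of_nonpos hy]
  ring

theorem stmt_1 (ε : ℝ) (hε : 0 ≤ ε) (x y : ℝ) :
    (0 < y → grpoF ε x y = y * min x (1 + ε)) ∧
    (y ≤ 0 → grpoF ε x y = -(|y| * max x (1 - ε))) ∧
    grpoF ε x y =
      (if 0 < y then y * min x (1 + ε) else 0) -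
      (if y ≤ 0 then |y| * max x (1 - ε) else 0) := by
  refine ⟨grpoF_of_pos hε x, grpoF_of_nonpos hε x, ?_⟩
  rcases lt_or_ge 0 y with hy | hy
  · rw [if_pos hy, if_neg hy.not_ge, sub_zero, grpoF_of_pos hε x hy]
  · rw [if_neg hy.not_gt, if_pos hy, zero_sub, grpoF_of_nonpos hε x hy]
end

section
/- (Proposition 1.) Let Ω be a measurable space, r : Ω → Bool measurable, p ∈ (0,1), and let μ⁺, μ⁻ be probability measures with μ⁺({o | r o = true}) = 1 and μ⁻({o | r o = false}) = 1; set μ = p • μ⁺ + (1−p) • μ⁻ and A(o) = √((1−p)/p) if r o = true, A(o) = −√(p/(1−p)) if r o = false. Let f : ℝ → ℝ → ℝ and f⁺, f⁻ : ℝ → ℝ satisfy f(x, y) = y·f⁺(x) for all x whenever y > 0 and f(x, y) = −|y|·f⁻(x) for all x whenever y ≤ 0. Let ρ : Ω → List ℝ assign to each output a nonempty finite list of token likelihood ratios, and define s⁺(o) = (1/(ρ o).length)·Σ_{x ∈ ρ o} f⁺(x), s⁻(o) = (1/(ρ o).length)·Σ_{x ∈ ρ o} f⁻(x), and g(o) =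 (1/(ρ o).length)·Σ_{x ∈ ρ o} f(x, A(o)). If g is μ-integrable, s⁺ is μ⁺-integrable and s⁻ is μ⁻-integrable, then ∫ g dμ = √(p(1−p)) · ( ∫ s⁺ dμ⁺ − ∫ s⁻ dμ⁻ ). -/
/-! On correct outputs the advantage is the positive constant `√((1-p)/p)` and on incorrect ones
the nonpositive constant `-√(p/(1-p))`, so the sign-split form of `f` turns the per-output mean of
`f(·, A o)` into a constant multiple of `s⁺` or `s⁻`. Integrating against the mixture
`p • μ⁺ + (1-p) • μ⁻` and using `p √((1-p)/p) = (1-p) √(p/(1-p)) = √(p(1-p))` gives the claim. -/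

open MeasureTheory

lemma sum_map_eq_mul_of_pos {f : ℝ → ℝ → ℝ} {fp : ℝ → ℝ}
    (hfp : ∀ x y, 0 < y → f x y = y * fp x) {y : ℝ} (hy : 0 < y) (l : List ℝ) :
    (l.map fun x => f x y).sum = y * (l.map fp).sum := by
  rw [← List.sum_map_mul_left, funext fun x => hfp x y hy]

lemma sum_map_eq_neg_mul_of_nonpos {f : ℝ → ℝ → ℝ} {fm : ℝ → ℝ}
    (hfm : ∀ x y, y ≤ 0 → f x y = -(|y| * fm x)) {y : ℝ} (hy : y ≤ 0) (l : List ℝ) :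
    (l.map fun x => f x y).sum = -(|y| * (l.map fm).sum) := by
  simp_rw [← neg_mul, ← List.sum_map_mul_left, hfm _ y hy, neg_mul]

lemma integral_ofReal_smul_add_ofReal_smul_measure {Ω G : Type*} [MeasurableSpace Ω]
    [NormedAddCommGroup G] [NormedSpace ℝ G] {μ ν : Measure Ω} {g : Ω → G} {a b : ℝ}
    (ha : 0 ≤ a) (hb : 0 ≤ b) (hg : Integrable g (ENNReal.ofReal a • μ + ENNReal.ofReal b • ν)) :
    ∫ o, g o ∂(ENNReal.ofReal a • μ + ENNReal.ofReal b • ν) = a • ∫ o, g o ∂μ + b • ∫ o, g o ∂ν := by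
  rw [integral_add_measure hg.left_of_add_measure hg.right_of_add_measure,
    integral_smul_measure, integral_smul_measure, ENNReal.toReal_ofReal ha,
    ENNReal.toReal_ofReal hb]

lemma Real.mul_sqrt_div_eq_sqrt_mul {a : ℝ} (ha : 0 ≤ a) (b : ℝ) : a * √(b / a) = √(a * b) := by
  rcases ha.eq_or_lt with rfl | ha
  · simp
  · calc a * √(b / a) = √(a ^ 2 * (b / a)) := by
          rw [Real.sqrt_mul (sq_nonneg a), Real.sqrt_sq ha.le]
      _ = √(a * b) := by
          congr 1
          field_simp

theorem stmt_4_general {Ω : Type*} [MeasurableSpace Ω]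
    (r : Ω → Bool) (hr : Measurable r)
    (p : ℝ) (hp : p ∈ Set.Ioo (0 : ℝ) 1)
    (μpos μneg : Measure Ω) [IsProbabilityMeasure μpos] [IsProbabilityMeasure μneg]
    (hpos : μpos {o | r o = true} = 1) (hneg : μneg {o | r o = false} = 1)
    (μ : Measure Ω)
    (hμ : μ = ENNReal.ofReal p • μpos + ENNReal.ofReal (1 - p) • μneg)
    (A : Ω → ℝ)
    (hA : ∀ o, A o = if r o then Real.sqrt ((1 - p) / p) else -Real.sqrt (p / (1 - p)))
    (f : ℝ → ℝ → ℝ) (fp fm : ℝ → ℝ)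
    (hfp : ∀ x y, 0 < y → f x y = y * fp x)
    (hfm : ∀ x y, y ≤ 0 → f x y = -(|y| * fm x))
    (ρ : Ω → List ℝ)
    (sp sm g : Ω → ℝ)
    (hsp : ∀ o, sp o = (1 / ((ρ o).length : ℝ)) * ((ρ o).map fp).sum)
    (hsm : ∀ o, sm o = (1 / ((ρ o).length : ℝ)) * ((ρ o).map fm).sum)
    (hg : ∀ o, g o = (1 / ((ρ o).length : ℝ)) * ((ρ o).map (fun x => f x (A o))).sum)
    (hgint : Integrable g μ) :
    ∫ o, g o ∂μ =
      Real.sqrt (p * (1 - p)) * ((∫ o, sp o ∂μpos) - ∫ o, sm o ∂μneg) := by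
  obtain ⟨hp0, hp1⟩ := hp
  have hg_pos : ∀ᵐ o ∂μpos, g o = √((1 - p) / p) * sp o := by
    filter_upwards [(mem_ae_iff_prob_eq_one (hr (measurableSet_singleton true))).2 hpos]
      with o (ho : r o = true)
    have hAo : A o = √((1 - p) / p) := by rw [hA, if_pos ho]
    rw [hg, hsp, hAo, sum_map_eq_mul_of_pos hfp (Real.sqrt_pos.2 (div_pos (sub_pos.2 hp1) hp0)),
      mul_left_comm]
  have hg_neg : ∀ᵐ o ∂μneg, g o = -(√(p / (1 - p)) * sm o) := by
    filter_upwards [(mem_ae_iff_prob_eq_one (hr (measurableSet_singleton false))).2 hneg]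
      with o (ho : r o = false)
    have hAo : A o = -√(p / (1 - p)) := by rw [hA, ho, if_neg Bool.false_ne_true]
    rw [hg, hsm, hAo, sum_map_eq_neg_mul_of_nonpos hfm (neg_nonpos.2 (Real.sqrt_nonneg _)),
      abs_neg, abs_of_nonneg (Real.sqrt_nonneg _)]
    ring
  rw [hμ] at hgint ⊢
  rw [integral_ofReal_smul_add_ofReal_smul_measure hp0.le (sub_nonneg.2 hp1.le) hgint,
    integral_congr_ae hg_pos, integral_congr_ae hg_neg, integral_neg, integral_const_mul,
    integral_const_mul, smul_eq_mul, smul_eq_mul]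
  have hpos_coeff := Real.mul_sqrt_div_eq_sqrt_mul hp0.le (1 - p)
  have hneg_coeff := Real.mul_sqrt_div_eq_sqrt_mul (sub_nonneg.2 hp1.le) p
  rw [mul_comm (1 - p) p] at hneg_coeff
  linear_combination (∫ o, sp o ∂μpos) * hpos_coeff - (∫ o, sm o ∂μneg) * hneg_coeff

theorem stmt_4 {Ω : Type*} [MeasurableSpace Ω]
    (r : Ω → Bool) (hr : Measurable r)
    (p : ℝ) (hp : p ∈ Set.Ioo (0 : ℝ) 1)
    (μpos μneg : Measure Ω) [IsProbabilityMeasure μpos] [IsProbabilityMeasure μneg]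
    (hpos : μpos {o | r o = true} = 1) (hneg : μneg {o | r o = false} = 1)
    (μ : Measure Ω)
    (hμ : μ = ENNReal.ofReal p • μpos + ENNReal.ofReal (1 - p) • μneg)
    (A : Ω → ℝ)
    (hA : ∀ o, A o = if r o then Real.sqrt ((1 - p) / p) else -Real.sqrt (p / (1 - p)))
    (f : ℝ → ℝ → ℝ) (fp fm : ℝ → ℝ)
    (hfp : ∀ x y, 0 < y → f x y = y * fp x)
    (hfm : ∀ x y, y ≤ 0 → f x y = -(|y| * fm x))
    (ρ : Ω → List ℝ) (hρ : ∀ o, ρ o ≠ [])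
    (sp sm g : Ω → ℝ)
    (hsp : ∀ o, sp o = (1 / ((ρ o).length : ℝ)) * ((ρ o).map fp).sum)
    (hsm : ∀ o, sm o = (1 / ((ρ o).length : ℝ)) * ((ρ o).map fm).sum)
    (hg : ∀ o, g o = (1 / ((ρ o).length : ℝ)) * ((ρ o).map (fun x => f x (A o))).sum)
    (hgint : Integrable g μ) (hspint : Integrable sp μpos) (hsmint : Integrable sm μneg) :
    ∫ o, g o ∂μ =
      Real.sqrt (p * (1 - p)) * ((∫ o, sp o ∂μpos) - ∫ o, sm o ∂μneg) :=
  stmt_4_general r hr p hp μpos μneg hpos hneg μ hμ A hA f fp fm hfp hfm ρ sp sm g hsp hsm hg hgint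
end

section
/- (GRPO instance of Proposition 1.) Let Ω, r, p, μ⁺, μ⁻, μ, A, ρ be as in the mixture setup, and let ε ≥ 0. Define the clipped scores s⁺(o) = (1/(ρ o).length)·Σ_{x ∈ ρ o} min(x, 1+ε) and s⁻(o) = (1/(ρ o).length)·Σ_{x ∈ ρ o} max(x, 1−ε), and the GRPO integrand G(o) = (1/(ρ o).length)·Σ_{x ∈ ρ o} min(x·A(o), clip(x, 1−ε, 1+ε)·A(o)). If G is μ-integrable, s⁺ is μ⁺-integrable and s⁻ is μ⁻-integrable, then ∫ G dμ = √(p(1−p)) · ( ∫ s⁺ dμ⁺ − ∫ s⁻ dμ⁻ ). -/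
open MeasureTheory

/-!
Every advantage has the sign of its reward. For a positive advantage `c` the clipped term
`min (x * c) (clip x (1 - ε) (1 + ε) * c)` collapses to `min x (1 + ε) * c`, and for a negative
one to `max x (1 - ε) * c`; so `G = √((1-p)/p) * s⁺` on `{r = true}`, which carries `μ⁺`, and
`G = -√(p/(1-p)) * s⁻` on `{r = false}`, which carries `μ⁻`. Integrating against the mixture
gives `p √((1-p)/p) ∫ s⁺ dμ⁺ - (1-p) √(p/(1-p)) ∫ s⁻ dμ⁻`, and both coefficients equal
`√(p(1-p))`.
-/

theorem max_mul_of_nonpos {a b c : ℝ} (hc : c ≤ 0) : max a b * c = min (a * c) (b * c) := by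
  rcases le_total a b with h | h
  · rw [max_eq_right h, min_eq_right (mul_le_mul_of_nonpos_right h hc)]
  · rw [max_eq_left h, min_eq_left (mul_le_mul_of_nonpos_right h hc)]

theorem Real.mul_sqrt_div_self {a : ℝ} (b : ℝ) (ha : 0 ≤ a) : a * √(b / a) = √(a * b) := by
  rcases ha.eq_or_lt with rfl | ha
  · simp
  · calc a * √(b / a)
        = √(a * a) * √(b / a) := by rw [Real.sqrt_mul_self ha.le]
      _ = √(a * a * (b / a)) := (Real.sqrt_mul (mul_self_nonneg a) _).symm
      _ = √(a * b) := by field_simp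

section Clip

variable {a b : ℝ}

theorem min_clip (x : ℝ) (hab : a ≤ b) : min x (clip x a b) = min x b := by
  unfold clip; grind

theorem max_clip (x : ℝ) (hab : a ≤ b) : max x (clip x a b) = max x a := by
  unfold clip; grind

variable (l : List ℝ) {c : ℝ}

theorem sum_map_min_mul_clip_mul_of_nonneg (hab : a ≤ b) (hc : 0 ≤ c) :
    (l.map fun x => min (x * c) (clip x a b * c)).sum =
      (l.map fun x => min x b).sum * c := by
  simp_rw [← min_mul_of_nonneg _ _ hc, min_clip _ hab, List.sum_map_mul_right]

theorem sum_map_min_mul_clip_mul_of_nonpos (hab : a ≤ b) (hc : c ≤ 0) :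
    (l.map fun x => min (x * c) (clip x a b * c)).sum =
      (l.map fun x => max x a).sum * c := by
  simp_rw [← max_mul_of_nonpos hc, max_clip _ hab, List.sum_map_mul_right]

end Clip

theorem integral_smul_add_smul_measure {Ω : Type*} [MeasurableSpace Ω] {μ ν : Measure Ω}
    {a b : ENNReal} {f : Ω → ℝ} (hf : Integrable f (a • μ + b • ν)) :
    ∫ x, f x ∂(a • μ + b • ν) = a.toReal * ∫ x, f x ∂μ + b.toReal * ∫ x, f x ∂ν := by
  rw [integral_add_measure hf.left_of_add_measure hf.right_of_add_measure,
    integral_smul_measure, integral_smul_measure, smul_eq_mul, smul_eq_mul]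

theorem stmt_5_general {Ω : Type*} [MeasurableSpace Ω]
    (r : Ω → Bool) (hr : Measurable r)
    (p : ℝ) (hp : p ∈ Set.Ioo (0 : ℝ) 1)
    (μpos μneg : Measure Ω) [IsProbabilityMeasure μpos] [IsProbabilityMeasure μneg]
    (hpos : μpos {o | r o = true} = 1) (hneg : μneg {o | r o = false} = 1)
    (μ : Measure Ω)
    (hμ : μ = ENNReal.ofReal p • μpos + ENNReal.ofReal (1 - p) • μneg)
    (A : Ω → ℝ)
    (hA : ∀ o, A o = if r o then Real.sqrt ((1 - p) / p) else -Real.sqrt (p / (1 - p)))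
    (ε : ℝ) (hε : 0 ≤ ε)
    (ρ : Ω → List ℝ)
    (sp sm G : Ω → ℝ)
    (hsp : ∀ o, sp o = (1 / ((ρ o).length : ℝ)) * ((ρ o).map (fun x => min x (1 + ε))).sum)
    (hsm : ∀ o, sm o = (1 / ((ρ o).length : ℝ)) * ((ρ o).map (fun x => max x (1 - ε))).sum)
    (hG : ∀ o, G o = (1 / ((ρ o).length : ℝ)) *
      ((ρ o).map (fun x => min (x * A o) (clip x (1 - ε) (1 + ε) * A o))).sum)
    (hGint : Integrable G μ) :
    ∫ o, G o ∂μ =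
      Real.sqrt (p * (1 - p)) * ((∫ o, sp o ∂μpos) - ∫ o, sm o ∂μneg) := by
  obtain ⟨hp0, hp1⟩ := hp
  have hε' : 1 - ε ≤ 1 + ε := by linarith
  have hr_pos : ∀ᵐ o ∂μpos, r o = true :=
    (mem_ae_iff_prob_eq_one (hr (measurableSet_singleton _))).2 hpos
  have hr_neg : ∀ᵐ o ∂μneg, r o = false :=
    (mem_ae_iff_prob_eq_one (hr (measurableSet_singleton _))).2 hneg
  have hG_pos : ∀ᵐ o ∂μpos, G o = √((1 - p) / p) * sp o :=
    hr_pos.mono fun o ho => by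
      rw [hG, hsp, hA, if_pos ho,
        sum_map_min_mul_clip_mul_of_nonneg _ hε' (Real.sqrt_nonneg _)]
      ring
  have hG_neg : ∀ᵐ o ∂μneg, G o = -√(p / (1 - p)) * sm o :=
    hr_neg.mono fun o ho => by
      rw [hG, hsm, hA, if_neg (by simpa using ho),
        sum_map_min_mul_clip_mul_of_nonpos _ hε' (neg_nonpos.2 (Real.sqrt_nonneg _))]
      ring
  subst hμ
  rw [integral_smul_add_smul_measure hGint, integral_congr_ae hG_pos, integral_congr_ae hG_neg,
    integral_const_mul, integral_const_mul, ENNReal.toReal_ofReal hp0.le,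
    ENNReal.toReal_ofReal (sub_nonneg.2 hp1.le)]
  have hcoef_pos := Real.mul_sqrt_div_self (1 - p) hp0.le
  have hcoef_neg := Real.mul_sqrt_div_self p (sub_nonneg.2 hp1.le)
  rw [mul_comm (1 - p) p] at hcoef_neg
  linear_combination (∫ o, sp o ∂μpos) * hcoef_pos - (∫ o, sm o ∂μneg) * hcoef_neg

theorem stmt_5 {Ω : Type*} [MeasurableSpace Ω]
    (r : Ω → Bool) (hr : Measurable r)
    (p : ℝ) (hp : p ∈ Set.Ioo (0 : ℝ) 1)
    (μpos μneg : Measure Ω) [IsProbabilityMeasure μpos] [IsProbabilityMeasure μneg]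
    (hpos : μpos {o | r o = true} = 1) (hneg : μneg {o | r o = false} = 1)
    (μ : Measure Ω)
    (hμ : μ = ENNReal.ofReal p • μpos + ENNReal.ofReal (1 - p) • μneg)
    (A : Ω → ℝ)
    (hA : ∀ o, A o = if r o then Real.sqrt ((1 - p) / p) else -Real.sqrt (p / (1 - p)))
    (ε : ℝ) (hε : 0 ≤ ε)
    (ρ : Ω → List ℝ) (hρ : ∀ o, ρ o ≠ [])
    (sp sm G : Ω → ℝ)
    (hsp : ∀ o, sp o = (1 / ((ρ o).length : ℝ)) * ((ρ o).map (fun x => min x (1 + ε))).sum)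
    (hsm : ∀ o, sm o = (1 / ((ρ o).length : ℝ)) * ((ρ o).map (fun x => max x (1 - ε))).sum)
    (hG : ∀ o, G o = (1 / ((ρ o).length : ℝ)) *
      ((ρ o).map (fun x => min (x * A o) (clip x (1 - ε) (1 + ε) * A o))).sum)
    (hGint : Integrable G μ) (hspint : Integrable sp μpos) (hsmint : Integrable sm μneg) :
    ∫ o, G o ∂μ =
      Real.sqrt (p * (1 - p)) * ((∫ o, sp o ∂μpos) - ∫ o, sm o ∂μneg) :=
  stmt_5_general r hr p hp μpos μneg hpos hneg μ hμ A hA ε hε ρ sp sm G hsp hsm hG hGint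
end

section
/- Let Ω, r, p, μ⁺, μ⁻, μ be as in the mixture setup and let Â(o) = 1−p if r o = true and Â(o) = −p if r o = false be the unnormalized advantage. For every h : Ω → ℝ such that h is μ⁺-integrable, h is μ⁻-integrable, and h·Â is μ-integrable, one has ∫ h(o)·Â(o) dμ(o) = p(1−p) · ( ∫ h dμ⁺ − ∫ h dμ⁻ ). Hence methods using the unnormalized advantage (Dr. GRPO) carry the question-level difficulty weight p(1−p). -/
/-! On the positive component `Â` is the constant `1 - p`, on the negative one the constant `-p`,
so integrating `h * Â` against the mixture `p • μ⁺ + (1 - p) • μ⁻` gives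
`p (1 - p) ∫ h dμ⁺ - (1 - p) p ∫ h dμ⁻`. -/

open MeasureTheory

namespace MeasureTheory

variable {Ω : Type*} [MeasurableSpace Ω] {μ ν : Measure Ω}

lemma integral_mul_of_ae_eq_const {h g : Ω → ℝ} {c : ℝ} (hg : g =ᵐ[μ] fun _ => c) :
    ∫ o, h o * g o ∂μ = (∫ o, h o ∂μ) * c := by
  rw [← integral_mul_const]
  exact integral_congr_ae (hg.mono fun o ho => congrArg (h o * ·) ho)

lemma Integrable.mul_of_ae_eq_const {h g : Ω → ℝ} {c : ℝ} (hh : Integrable h μ)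
    (hg : g =ᵐ[μ] fun _ => c) : Integrable (fun o => h o * g o) μ :=
  (hh.mul_const c).congr (hg.mono fun o ho => congrArg (h o * ·) ho.symm)

lemma integral_ofReal_smul_add_ofReal_smul {f : Ω → ℝ} {a b : ℝ} (ha : 0 ≤ a) (hb : 0 ≤ b)
    (hμ : Integrable f μ) (hν : Integrable f ν) :
    ∫ o, f o ∂(ENNReal.ofReal a • μ + ENNReal.ofReal b • ν) =
      a * ∫ o, f o ∂μ + b * ∫ o, f o ∂ν := by
  rw [integral_add_measure (hμ.smul_measure ENNReal.ofReal_ne_top)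
      (hν.smul_measure ENNReal.ofReal_ne_top), integral_smul_measure, integral_smul_measure,
    ENNReal.toReal_ofReal ha, ENNReal.toReal_ofReal hb, smul_eq_mul, smul_eq_mul]

end MeasureTheory

theorem stmt_7_general {Ω : Type*} [MeasurableSpace Ω]
    (r : Ω → Bool) (hr : Measurable r)
    (p : ℝ) (hp : p ∈ Set.Ioo (0 : ℝ) 1)
    (μpos μneg : Measure Ω) [IsProbabilityMeasure μpos] [IsProbabilityMeasure μneg]
    (hpos : μpos {o | r o = true} = 1) (hneg : μneg {o | r o = false} = 1)
    (μ : Measure Ω)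
    (hμ : μ = ENNReal.ofReal p • μpos + ENNReal.ofReal (1 - p) • μneg)
    (Ahat : Ω → ℝ)
    (hAhat : ∀ o, Ahat o = if r o then 1 - p else -p)
    (h : Ω → ℝ)
    (hpint : Integrable h μpos) (hmint : Integrable h μneg) :
    ∫ o, h o * Ahat o ∂μ =
      p * (1 - p) * ((∫ o, h o ∂μpos) - ∫ o, h o ∂μneg) := by
  obtain ⟨hp0, hp1⟩ := hp
  have hApos : Ahat =ᵐ[μpos] fun _ => 1 - p := by
    have hae : ∀ᵐ o ∂μpos, r o = true :=
      (ae_iff_measure_eq (hr (measurableSet_singleton true)).nullMeasurableSet).2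
        (hpos.trans measure_univ.symm)
    filter_upwards [hae] with o ho
    simp [hAhat, ho]
  have hAneg : Ahat =ᵐ[μneg] fun _ => -p := by
    have hae : ∀ᵐ o ∂μneg, r o = false :=
      (ae_iff_measure_eq (hr (measurableSet_singleton false)).nullMeasurableSet).2
        (hneg.trans measure_univ.symm)
    filter_upwards [hae] with o ho
    simp [hAhat, ho]
  rw [hμ, integral_ofReal_smul_add_ofReal_smul hp0.le (sub_nonneg.2 hp1.le)
      (hpint.mul_of_ae_eq_const hApos) (hmint.mul_of_ae_eq_const hAneg),
    integral_mul_of_ae_eq_const hApos, integral_mul_of_ae_eq_const hAneg]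
  ring

theorem stmt_7 {Ω : Type*} [MeasurableSpace Ω]
    (r : Ω → Bool) (hr : Measurable r)
    (p : ℝ) (hp : p ∈ Set.Ioo (0 : ℝ) 1)
    (μpos μneg : Measure Ω) [IsProbabilityMeasure μpos] [IsProbabilityMeasure μneg]
    (hpos : μpos {o | r o = true} = 1) (hneg : μneg {o | r o = false} = 1)
    (μ : Measure Ω)
    (hμ : μ = ENNReal.ofReal p • μpos + ENNReal.ofReal (1 - p) • μneg)
    (Ahat : Ω → ℝ)
    (hAhat : ∀ o, Ahat o = if r o then 1 - p else -p)
    (h : Ω → ℝ)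
    (hpint : Integrable h μpos) (hmint : Integrable h μneg)
    (hAint : Integrable (fun o => h o * Ahat o) μ) :
    ∫ o, h o * Ahat o ∂μ =
      p * (1 - p) * ((∫ o, h o ∂μpos) - ∫ o, h o ∂μneg) :=
  stmt_7_general r hr p hp μpos μneg hpos hneg μ hμ Ahat hAhat h hpint hmint
end

section
/- Let μ⁺ and μ⁻ be probability measures on a measurable space Ω, let τ > 0, and let s : Ω → ℝ be integrable with respect to both μ⁺ and μ⁻. Assume that for every o the function o′ ↦ exp((s(o′) − s(o))/τ) is μ⁻-integrable and that the function o ↦ −τ · log( ∫ exp((s(o′) − s(o))/τ) dμ⁻(o′) ) is μ⁺-integrable. Then ∫ [ −τ · log( ∫ exp((s(o′) − s(o))/τ) dμ⁻(o′) ) ] dμ⁺(o) ≤ ∫ s dμ⁺ − ∫ s dμ⁻, i.e., the DRO objective J₂ is at most the plain discriminative objective J₁. -/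
/-! By Jensen's inequality for the convex function `exp`, `log E[exp f] ≥ E[f]` under a
probability measure. Applied for each fixed `o` to `f = (s(·) - s(o)) / τ` under `μ⁻`, this bounds
the integrand of `J₂` by `s(o) - E_{μ⁻}[s]`; integrating over `μ⁺` gives `J₂ ≤ J₁`. -/

open MeasureTheory Real

section

variable {Ω : Type*} [MeasurableSpace Ω] {μ : Measure Ω} [IsProbabilityMeasure μ]

theorem integral_le_log_integral_exp {f : Ω → ℝ} (hf : Integrable f μ)
    (hexp : Integrable (fun x => exp (f x)) μ) :
    ∫ x, f x ∂μ ≤ log (∫ x, exp (f x) ∂μ) := by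
  have jensen : exp (∫ x, f x ∂μ) ≤ ∫ x, exp (f x) ∂μ :=
    convexOn_exp.map_integral_le continuous_exp.continuousOn isClosed_univ
      (Filter.Eventually.of_forall fun _ => trivial) hf hexp
  exact (le_log_iff_exp_le (integral_exp_pos hexp)).mpr jensen

theorem neg_mul_log_integral_exp_sub_div_le {τ : ℝ} (hτ : 0 < τ) {s : Ω → ℝ}
    (hs : Integrable s μ) (c : ℝ) (hexp : Integrable (fun x => exp ((s x - c) / τ)) μ) :
    -τ * log (∫ x, exp ((s x - c) / τ) ∂μ) ≤ c - ∫ x, s x ∂μ := by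
  have hmean : ∫ x, (s x - c) / τ ∂μ = ((∫ x, s x ∂μ) - c) / τ := by
    rw [integral_div, integral_sub hs (integrable_const c), integral_const, probReal_univ,
      one_smul]
  have key := integral_le_log_integral_exp (f := fun x => (s x - c) / τ)
    ((hs.sub (integrable_const c)).div_const τ) hexp
  rw [hmean, div_le_iff₀ hτ] at key
  linarith

end

theorem stmt_12 {Ω : Type*} [MeasurableSpace Ω]
    (μpos μneg : Measure Ω) [IsProbabilityMeasure μpos] [IsProbabilityMeasure μneg]
    (τ : ℝ) (hτ : 0 < τ)
    (s : Ω → ℝ) (hspos : Integrable s μpos) (hsneg : Integrable s μneg)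
    (hexp : ∀ o, Integrable (fun o' => Real.exp ((s o' - s o) / τ)) μneg)
    (hint : Integrable
      (fun o => -τ * Real.log (∫ o', Real.exp ((s o' - s o) / τ) ∂μneg)) μpos) :
    ∫ o, -τ * Real.log (∫ o', Real.exp ((s o' - s o) / τ) ∂μneg) ∂μpos ≤
      (∫ o, s o ∂μpos) - ∫ o', s o' ∂μneg := by
  calc ∫ o, -τ * log (∫ o', exp ((s o' - s o) / τ) ∂μneg) ∂μpos
      ≤ ∫ o, (s o - ∫ o', s o' ∂μneg) ∂μpos :=
        integral_mono hint (hspos.sub (integrable_const _)) fun o =>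
          neg_mul_log_integral_exp_sub_div_le hτ hsneg (s o) (hexp o)
    _ = (∫ o, s o ∂μpos) - ∫ o', s o' ∂μneg := by
        rw [integral_sub hspos (integrable_const _), integral_const, probReal_univ, one_smul]
end
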